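/- arXiv:1310.1514 — 2 statements merged into one kernel-verified Lean document; each statement's English description precedes it below -/
import Mathlib

section
/- Let ε ∈ (0,1), δ ∈ (0, ε/2), and let K, L ⊂ ℝⁿ be ε-smooth convex bodies with d_H(K,L) ≤ δ. Then for every x ∈ ∂K, the outer unit normals satisfy u_L(p(x)) • u_K(x) ≥ 1 − 2δ/ε, where p(x) is the nearest point to x on ∂L. -/
open Metric Set Pointwise
open scoped RealInnerProductSpace

/-!
The Hausdorff bound puts `L` in the half-space `⟪· - x, u_K(x)⟫ ≤ δ`, and it brings `∂L` within
`δ` of `x`. By ε-smoothness the ball of radius `ε` whose boundary touches `∂L` at `p = p(x)` from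
inside, centred at `p - ε u_L(p)`, lies in `L`; its point `p - ε u_L(p) + ε u_K(x)` must then lie
in the half-space, and since `|p - x| ≤ δ` this gives `ε ⟪u_L(p), u_K(x)⟫ ≥ ε - 2δ`.
-/

theorem infDist_frontier_le_dist {E : Type*} [NormedAddCommGroup E] [NormedSpace ℝ E]
    [FiniteDimensional ℝ E] {s : Set E} {x z : E} (h : x ∈ s ↔ z ∉ s) :
    infDist x (frontier s) ≤ dist x z := by
  wlog hx : x ∈ s generalizing s
  · have hcompl : x ∈ sᶜ ↔ z ∉ sᶜ := by simp only [mem_compl_iff, not_not]; tauto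
    simpa only [frontier_compl] using this hcompl hx
  obtain ⟨y, hy, hxy⟩ :=
    exists_mem_frontier_infDist_compl_eq_dist hx ((ne_univ_iff_exists_notMem s).2 ⟨z, h.1 hx⟩)
  calc infDist x (frontier s) ≤ dist x y := infDist_le_dist_of_mem hy
    _ = infDist x sᶜ := hxy.symm
    _ ≤ dist x z := infDist_le_dist_of_mem (h.1 hx)

section InnerProductSpace

variable {E : Type*} [NormedAddCommGroup E] [InnerProductSpace ℝ E]

theorem eq_smul_of_norm_le_of_le_inner {w v : E} {ε : ℝ} (hw : ‖w‖ ≤ ε) (hv : ‖v‖ = 1)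
    (h : ε ≤ ⟪w, v⟫) : w = ε • v := by
  have hwv : ⟪w, v⟫ ≤ ‖w‖ := by simpa only [hv, mul_one] using real_inner_le_norm w v
  have hnorm : ‖w‖ = ε := by linarith
  have hcs : ‖v‖ • w = ‖w‖ • v := inner_eq_norm_mul_iff_real.1 (by rw [hv, mul_one]; linarith)
  rwa [hv, one_smul, hnorm] at hcs

theorem closedBall_sub_smul_subset_add_closedBall {A : Set E} {z v : E} {ε : ℝ}
    (hz : z ∈ A + closedBall 0 ε) (hv : ‖v‖ = 1)
    (hnormal : ∀ y ∈ A + closedBall 0 ε, ⟪y - z, v⟫ ≤ 0) :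
    closedBall (z - ε • v) ε ⊆ A + closedBall 0 ε := by
  obtain ⟨q, hq, w, hw, rfl⟩ := hz
  rw [mem_closedBall_zero_iff] at hw
  have hε : 0 ≤ ε := (norm_nonneg w).trans hw
  have htest : q + ε • v ∈ A + closedBall 0 ε :=
    add_mem_add hq (by rw [mem_closedBall_zero_iff, norm_smul, hv, Real.norm_of_nonneg hε, mul_one])
  have hinner : ε ≤ ⟪w, v⟫ := by
    have := hnormal _ htest
    rw [add_sub_add_left_eq_sub, inner_sub_left, real_inner_smul_left, real_inner_self_eq_norm_sq,
      hv] at this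
    linarith
  rw [eq_smul_of_norm_le_of_le_inner hw hv hinner, add_sub_cancel_right,
    ← singleton_add_closedBall_zero]
  exact add_subset_add_right (singleton_subset_iff.2 hq)

theorem inner_sub_le_infDist {K : Set E} {x u : E} (hK : K.Nonempty) (hu : ‖u‖ ≤ 1)
    (hx : ∀ k ∈ K, ⟪k - x, u⟫ ≤ 0) (y : E) : ⟪y - x, u⟫ ≤ infDist y K := by
  refine (le_infDist hK).2 fun k hk => ?_
  calc ⟪y - x, u⟫ = ⟪y - k, u⟫ + ⟪k - x, u⟫ := by rw [← inner_add_left, sub_add_sub_cancel]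
    _ ≤ ‖y - k‖ * ‖u‖ + 0 := add_le_add (real_inner_le_norm _ _) (hx k hk)
    _ ≤ dist y k := by rw [add_zero, dist_eq_norm]; exact mul_le_of_le_one_right (norm_nonneg _) hu

theorem inner_sub_le_of_hausdorffDist_le {K L : Set E} {x u y : E} {δ : ℝ} (hK : K.Nonempty)
    (hu : ‖u‖ ≤ 1) (hx : ∀ k ∈ K, ⟪k - x, u⟫ ≤ 0) (hfin : hausdorffEDist K L ≠ ⊤)
    (hd : hausdorffDist K L ≤ δ) (hy : y ∈ L) : ⟪y - x, u⟫ ≤ δ :=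
  calc ⟪y - x, u⟫ ≤ infDist y K := inner_sub_le_infDist hK hu hx y
    _ ≤ hausdorffDist L K := infDist_le_hausdorffDist_of_mem hy (by rwa [hausdorffEDist_comm])
    _ ≤ δ := by rwa [hausdorffDist_comm]

theorem infDist_frontier_le_of_hausdorffDist_le [FiniteDimensional ℝ E] {K L : Set E} {x u : E}
    {δ : ℝ} (hxK : x ∈ K) (hu : ‖u‖ = 1) (hx : ∀ k ∈ K, ⟪k - x, u⟫ ≤ 0)
    (hfin : hausdorffEDist K L ≠ ⊤) (hd : hausdorffDist K L ≤ δ) : infDist x (frontier L) ≤ δ := by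
  refine le_of_forall_gt_imp_ge_of_dense fun t ht => ?_
  by_cases hxL : x ∈ L
  · have ht0 : 0 ≤ t := hausdorffDist_nonneg.trans (hd.trans ht.le)
    have hout : x + t • u ∉ L := fun hin => by
      have := inner_sub_le_of_hausdorffDist_le ⟨x, hxK⟩ hu.le hx hfin hd hin
      rw [add_sub_cancel_left, real_inner_smul_left, real_inner_self_eq_norm_sq, hu] at this
      linarith
    calc infDist x (frontier L) ≤ dist x (x + t • u) := infDist_frontier_le_dist (by tauto)
      _ = t := by rw [dist_self_add_right, norm_smul, hu, mul_one, Real.norm_of_nonneg ht0]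
  · obtain ⟨z, hz, hxz⟩ := exists_dist_lt_of_hausdorffDist_lt hxK (hd.trans_lt ht) hfin
    exact (infDist_frontier_le_dist (by tauto)).trans hxz.le

theorem one_sub_two_mul_div_le_inner {L : Set E} {x p u v : E} {ε δ : ℝ} (hε : 0 < ε)
    (hu : ‖u‖ = 1) (hL : ∀ y ∈ L, ⟪y - x, u⟫ ≤ δ) (hxp : dist x p ≤ δ)
    (hball : closedBall (p - ε • v) ε ⊆ L) :
    1 - 2 * δ / ε ≤ ⟪v, u⟫ := by
  have htest := hL _ (hball (a := p - ε • v + ε • u) (mem_closedBall'.2 (by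
    rw [dist_self_add_right, norm_smul, hu, mul_one, Real.norm_of_nonneg hε.le])))
  have hpx : -δ ≤ ⟪p - x, u⟫ := by
    have := abs_real_inner_le_norm (p - x) u
    rw [hu, mul_one, ← dist_eq_norm, dist_comm] at this
    linarith [neg_abs_le ⟪p - x, u⟫]
  have hexpand : ⟪p - ε • v + ε • u - x, u⟫ = ⟪p - x, u⟫ - ε * ⟪v, u⟫ + ε := by
    simp only [sub_add_eq_add_sub, inner_sub_left, inner_add_left, real_inner_smul_left,
      real_inner_self_eq_norm_sq, hu]
    ring
  rw [sub_le_comm, le_div_iff₀ hε]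
  linarith

end InnerProductSpace

theorem normals_inner_ge_general
    (n : ℕ) (ε δ : ℝ) (hε : ε ∈ Set.Ioo (0:ℝ) 1)
    (K L : Set (EuclideanSpace ℝ (Fin n)))
    (hKsmooth : ∃ K' : Set (EuclideanSpace ℝ (Fin n)), K'.Nonempty ∧ IsCompact K' ∧
      Convex ℝ K' ∧ K = K' + closedBall (0 : EuclideanSpace ℝ (Fin n)) ε)
    (hLsmooth : ∃ L' : Set (EuclideanSpace ℝ (Fin n)), L'.Nonempty ∧ IsCompact L' ∧
      Convex ℝ L' ∧ L = L' + closedBall (0 : EuclideanSpace ℝ (Fin n)) ε)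
    (hd : hausdorffDist K L ≤ δ)
    (p : EuclideanSpace ℝ (Fin n) → EuclideanSpace ℝ (Fin n))
    (hp : ∀ x ∈ frontier K, p x ∈ frontier L ∧ dist x (p x) = infDist x (frontier L))
    (uK uL : EuclideanSpace ℝ (Fin n) → EuclideanSpace ℝ (Fin n))
    (huK_unit : ∀ x ∈ frontier K, ‖uK x‖ = 1)
    (huK_normal : ∀ x ∈ frontier K, ∀ y ∈ K, ⟪y - x, uK x⟫ ≤ 0)
    (huL_unit : ∀ x ∈ frontier L, ‖uL x‖ = 1)
    (huL_normal : ∀ x ∈ frontier L, ∀ y ∈ L, ⟪y - x, uL x⟫ ≤ 0) :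
    ∀ x ∈ frontier K, 1 - 2 * δ / ε ≤ ⟪uL (p x), uK x⟫ := by
  intro x hx
  obtain ⟨K', -, hK', -, hKeq⟩ := hKsmooth
  obtain ⟨L', -, hL', -, hLeq⟩ := hLsmooth
  have hKc : IsCompact K := hKeq ▸ hK'.add (isCompact_closedBall 0 ε)
  have hLc : IsCompact L := hLeq ▸ hL'.add (isCompact_closedBall 0 ε)
  obtain ⟨hpx, hpdist⟩ := hp x hx
  have hxK : x ∈ K := hKc.isClosed.frontier_subset hx
  have hpL : p x ∈ L := hLc.isClosed.frontier_subset hpx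
  have hfin : hausdorffEDist K L ≠ ⊤ := hausdorffEDist_ne_top_of_nonempty_of_bounded
    ⟨x, hxK⟩ ⟨p x, hpL⟩ hKc.isBounded hLc.isBounded
  have hball : closedBall (p x - ε • uL (p x)) ε ⊆ L := by
    have hnormal := huL_normal _ hpx
    rw [hLeq] at hpL hnormal ⊢
    exact closedBall_sub_smul_subset_add_closedBall hpL (huL_unit _ hpx) hnormal
  refine one_sub_two_mul_div_le_inner hε.1 (huK_unit x hx)
    (fun y hy => inner_sub_le_of_hausdorffDist_le ⟨x, hxK⟩ (huK_unit x hx).le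
      (huK_normal x hx) hfin hd hy) ?_ hball
  rw [hpdist]
  exact infDist_frontier_le_of_hausdorffDist_le hxK (huK_unit x hx) (huK_normal x hx) hfin hd

/-- For ε-smooth convex bodies K, L with Hausdorff distance at most δ < ε/2, the outer
unit normal of L at the nearest point p(x) ∈ ∂L to x ∈ ∂K and the outer unit normal of K
at x satisfy u_L(p(x)) • u_K(x) ≥ 1 − 2δ/ε. -/
theorem normals_inner_ge
    (n : ℕ) (ε δ : ℝ) (hε : ε ∈ Set.Ioo (0:ℝ) 1) (hδ : δ ∈ Set.Ioo (0:ℝ) (ε/2))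
    (K L : Set (EuclideanSpace ℝ (Fin n)))
    (hKsmooth : ∃ K' : Set (EuclideanSpace ℝ (Fin n)), K'.Nonempty ∧ IsCompact K' ∧
      Convex ℝ K' ∧ K = K' + closedBall (0 : EuclideanSpace ℝ (Fin n)) ε)
    (hLsmooth : ∃ L' : Set (EuclideanSpace ℝ (Fin n)), L'.Nonempty ∧ IsCompact L' ∧
      Convex ℝ L' ∧ L = L' + closedBall (0 : EuclideanSpace ℝ (Fin n)) ε)
    (hd : hausdorffDist K L ≤ δ)
    (p : EuclideanSpace ℝ (Fin n) → EuclideanSpace ℝ (Fin n))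
    (hp : ∀ x ∈ frontier K, p x ∈ frontier L ∧ dist x (p x) = infDist x (frontier L))
    (uK uL : EuclideanSpace ℝ (Fin n) → EuclideanSpace ℝ (Fin n))
    (huK_unit : ∀ x ∈ frontier K, ‖uK x‖ = 1)
    (huK_normal : ∀ x ∈ frontier K, ∀ y ∈ K, ⟪y - x, uK x⟫ ≤ 0)
    (huL_unit : ∀ x ∈ frontier L, ‖uL x‖ = 1)
    (huL_normal : ∀ x ∈ frontier L, ∀ y ∈ L, ⟪y - x, uL x⟫ ≤ 0) :
    ∀ x ∈ frontier K, 1 - 2 * δ / ε ≤ ⟪uL (p x), uK x⟫ :=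
  normals_inner_ge_general n ε δ hε K L hKsmooth hLsmooth hd p hp uK uL huK_unit huK_normal huL_unit
    huL_normal
end

section
/- Let ε ∈ (0,1), δ ∈ (0, ε/2), and let K, L ⊂ ℝⁿ be ε-smooth convex bodies with d_H(K,L) ≤ δ. Then the map G : Nor K → Nor L between normal bundles, (x,u) ↦ (p(x), u_L(p(x))) where p(x) is the nearest point on ∂L, satisfies |G(x,u) − (x,u)| ≤ δ + 2√(δ/ε) for all (x,u) ∈ Nor K. -/
open Metric Set Pointwise
open scoped RealInnerProductSpace

/-!
Let `u = u_K(x)` and `q = p(x)`, `v = u_L(q)`. Every point of `L` lies within `δ` of `K`, hence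
in the half-space `⟪· - x, u⟫ ≤ δ`. This forces `|q - x| ≤ δ`: if `x ∈ L`, the point `x + t u`
leaves `L` for every `t > δ`, and if `x ∉ L`, a point of `L` at distance `≤ δ` from `x` is
separated from `x` by `∂L`. Since `L` is `ε`-smooth, it contains the ball of radius `ε` centred
at `q - ε v`, in particular the point `q - ε v + ε u`; the half-space bound at that point gives
`ε (1 - ⟪v, u⟫) ≤ 2δ`, i.e. `|v - u| ≤ 2 √(δ/ε)`.
-/

theorem IsPreconnected.inter_frontier_nonempty {X : Type*} [TopologicalSpace X] {s t : Set X}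
    (hs : IsPreconnected s) (hst : (s ∩ t).Nonempty) (hsdt : (s \ t).Nonempty) :
    (s ∩ frontier t).Nonempty := by
  by_contra h
  have hcover : s ⊆ interior t ∪ (closure t)ᶜ := fun x hx => by
    by_cases hxi : x ∈ interior t
    · exact Or.inl hxi
    · exact Or.inr fun hxc => h ⟨x, hx, hxc, hxi⟩
  obtain ⟨a, has, hat⟩ := hst
  obtain ⟨b, hbs, hbt⟩ := hsdt
  have ha : a ∈ interior t := (hcover has).resolve_right (not_not_intro (subset_closure hat))
  have hb : b ∈ (closure t)ᶜ := (hcover hbs).resolve_left fun hbi => hbt (interior_subset hbi)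
  obtain ⟨x, -, hxi, hxc⟩ :=
    hs _ _ isOpen_interior isClosed_closure.isOpen_compl hcover ⟨a, has, ha⟩ ⟨b, hbs, hb⟩
  exact hxc (interior_subset_closure hxi)

section Normed

variable {E : Type*} [NormedAddCommGroup E] [NormedSpace ℝ E] {s : Set E} {a b x : E}

theorem infDist_frontier_le_dist_of_mem_of_notMem (ha : a ∈ s) (hb : b ∉ s) :
    infDist a (frontier s) ≤ dist a b := by
  obtain ⟨z, hz, hzs⟩ := (convex_segment a b).isPreconnected.inter_frontier_nonempty
    ⟨a, left_mem_segment ℝ a b, ha⟩ ⟨b, right_mem_segment ℝ a b, hb⟩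
  calc infDist a (frontier s) ≤ dist a z := infDist_le_dist_of_mem hzs
    _ ≤ dist a b := by linarith [dist_add_dist_of_mem_segment hz, dist_nonneg (x := z) (y := b)]

theorem infDist_frontier_le_infDist_of_notMem (hx : x ∉ s) :
    infDist x (frontier s) ≤ infDist x s := by
  rcases s.eq_empty_or_nonempty with rfl | hs
  · simp
  refine (le_infDist hs).2 fun y hy => ?_
  rw [← frontier_compl]
  exact infDist_frontier_le_dist_of_mem_of_notMem (s := sᶜ) hx (not_not_intro hy)

end Normed

section InnerProduct

variable {E : Type*} [NormedAddCommGroup E] [InnerProductSpace ℝ E]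

def IsOuterNormal (s : Set E) (x u : E) : Prop :=
  ∀ y ∈ s, ⟪y - x, u⟫ ≤ 0

theorem infDist_frontier_le_of_inner_sub_le {s : Set E} {x u : E} {c : ℝ} (hu : ‖u‖ = 1)
    (hc : 0 ≤ c) (hx : x ∈ s) (hs : ∀ w ∈ s, ⟪w - x, u⟫ ≤ c) :
    infDist x (frontier s) ≤ c := by
  refine le_of_forall_gt_imp_ge_of_dense fun t ht => ?_
  have hinner : ⟪(x + t • u) - x, u⟫ = t := by
    rw [add_sub_cancel_left, real_inner_smul_left, real_inner_self_eq_norm_sq, hu]; ring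
  have hout : x + t • u ∉ s := fun h => (hs _ h).not_gt (by rwa [hinner])
  calc infDist x (frontier s) ≤ dist x (x + t • u) :=
        infDist_frontier_le_dist_of_mem_of_notMem hx hout
    _ = t := by
      rw [dist_self_add_right, norm_smul, hu, mul_one, Real.norm_of_nonneg (hc.trans ht.le)]

theorem norm_sub_le_two_mul_sqrt_of_inner_le {x q u v : E} {ε δ : ℝ} (hε : 0 < ε)
    (hu : ‖u‖ = 1) (hv : ‖v‖ = 1) (hqx : ‖q - x‖ ≤ δ) (hw : ⟪q - ε • v + ε • u - x, u⟫ ≤ δ) :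
    ‖v - u‖ ≤ 2 * √(δ / ε) := by
  have hδ : 0 ≤ δ := (norm_nonneg _).trans hqx
  have hexp : ⟪q - ε • v + ε • u - x, u⟫ = ⟪q - x, u⟫ + ε - ε * ⟪v, u⟫ := by
    rw [show q - ε • v + ε • u - x = (q - x) + ε • u - ε • v by abel, inner_sub_left,
      inner_add_left, real_inner_smul_left, real_inner_smul_left, real_inner_self_eq_norm_sq, hu]
    ring
  have hqxu : -δ ≤ ⟪q - x, u⟫ := by
    have := abs_le.1 (abs_real_inner_le_norm (q - x) u)
    rw [hu, mul_one] at this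
    linarith
  have hsq : ‖v - u‖ ^ 2 ≤ (2 * √(δ / ε)) ^ 2 := by
    rw [norm_sub_sq_real, hv, hu, mul_pow, Real.sq_sqrt (div_nonneg hδ hε.le), mul_div_assoc',
      le_div_iff₀ hε]
    nlinarith
  exact (sq_le_sq₀ (norm_nonneg _) (by positivity)).1 hsq

namespace IsOuterNormal

variable {K L L' : Set E} {x u : E}

theorem inner_sub_le_infDist (h : IsOuterNormal K x u) (hK : K.Nonempty) (hu : ‖u‖ = 1)
    (w : E) : ⟪w - x, u⟫ ≤ infDist w K := by
  refine (le_infDist hK).2 fun y hy => ?_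
  calc ⟪w - x, u⟫ = ⟪w - y, u⟫ + ⟪y - x, u⟫ := by rw [← inner_add_left, sub_add_sub_cancel]
    _ ≤ ‖w - y‖ * ‖u‖ + 0 := add_le_add (real_inner_le_norm _ _) (h y hy)
    _ = dist w y := by rw [hu, mul_one, add_zero, dist_eq_norm]

theorem inner_sub_le_hausdorffDist (h : IsOuterNormal K x u) (hK : K.Nonempty) (hu : ‖u‖ = 1)
    (hKL : hausdorffEDist K L ≠ ⊤) {w : E} (hw : w ∈ L) :
    ⟪w - x, u⟫ ≤ hausdorffDist K L := by
  rw [hausdorffDist_comm]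
  exact (h.inner_sub_le_infDist hK hu w).trans
    (infDist_le_hausdorffDist_of_mem hw (by rwa [hausdorffEDist_comm]))

theorem infDist_frontier_le_hausdorffDist (h : IsOuterNormal K x u) (hu : ‖u‖ = 1)
    (hx : x ∈ K) (hKL : hausdorffEDist K L ≠ ⊤) :
    infDist x (frontier L) ≤ hausdorffDist K L := by
  by_cases hxL : x ∈ L
  · exact infDist_frontier_le_of_inner_sub_le hu hausdorffDist_nonneg hxL
      fun w hw => h.inner_sub_le_hausdorffDist ⟨x, hx⟩ hu hKL hw
  · exact (infDist_frontier_le_infDist_of_notMem hxL).trans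
      (infDist_le_hausdorffDist_of_mem hx hKL)

/-- The inner ball of radius `ε` touching an `ε`-parallel body at `q` is centred at `q - ε • v`. -/
theorem sub_smul_mem_of_mem_add_closedBall {q v : E} {ε : ℝ}
    (h : IsOuterNormal (L' + closedBall 0 ε) q v) (hv : ‖v‖ = 1) (hε : 0 ≤ ε)
    (hq : q ∈ L' + closedBall 0 ε) : q - ε • v ∈ L' := by
  obtain ⟨l, hl, b, hb, rfl⟩ := hq
  have hbε : ‖b‖ ≤ ε := mem_closedBall_zero_iff.1 hb
  have hεv : l + ε • v ∈ L' + closedBall 0 ε :=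
    add_mem_add hl (by rw [mem_closedBall_zero_iff, norm_smul, hv, mul_one, Real.norm_of_nonneg hε])
  have hinner : ε ≤ ⟪b, v⟫ := by
    have := h _ hεv
    rw [add_sub_add_left_eq_sub, inner_sub_left, real_inner_smul_left,
      real_inner_self_eq_norm_sq, hv] at this
    linarith
  have hle : ⟪b, v⟫ ≤ ‖b‖ := by simpa [hv] using real_inner_le_norm b v
  have hnorm : ‖b‖ = ε := le_antisymm hbε (hinner.trans hle)
  have hb_eq : b = ε • v := by
    have hcs : ⟪b, v⟫ = ‖b‖ * ‖v‖ := by rw [hv, mul_one]; linarith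
    simpa [hv, hnorm] using inner_eq_norm_mul_iff_real.1 hcs
  rwa [hb_eq, add_sub_cancel_right]

theorem norm_sub_le_of_mem_add_closedBall {q v : E} {ε δ : ℝ} (hxu : IsOuterNormal K x u)
    (hu : ‖u‖ = 1) (hx : x ∈ K) (hqv : IsOuterNormal (L' + closedBall 0 ε) q v) (hv : ‖v‖ = 1)
    (hq : q ∈ L' + closedBall 0 ε) (hε : 0 < ε) (hKL : hausdorffEDist K (L' + closedBall 0 ε) ≠ ⊤)
    (hd : hausdorffDist K (L' + closedBall 0 ε) ≤ δ) (hqx : ‖q - x‖ ≤ δ) :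
    ‖v - u‖ ≤ 2 * √(δ / ε) := by
  have hw : q - ε • v + ε • u ∈ L' + closedBall 0 ε :=
    add_mem_add (hqv.sub_smul_mem_of_mem_add_closedBall hv hε.le hq)
      (by rw [mem_closedBall_zero_iff, norm_smul, hu, mul_one, Real.norm_of_nonneg hε.le])
  exact norm_sub_le_two_mul_sqrt_of_inner_le hε hu hv hqx
    ((hxu.inner_sub_le_hausdorffDist ⟨x, hx⟩ hu hKL hw).trans hd)

end IsOuterNormal

end InnerProduct

theorem normal_bundle_map_displacement_general
    (n : ℕ) (ε δ : ℝ) (hε : ε ∈ Set.Ioo (0:ℝ) 1)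
    (K L : Set (EuclideanSpace ℝ (Fin n)))
    (hKsmooth : ∃ K' : Set (EuclideanSpace ℝ (Fin n)), K'.Nonempty ∧ IsCompact K' ∧
      Convex ℝ K' ∧ K = K' + closedBall (0 : EuclideanSpace ℝ (Fin n)) ε)
    (hLsmooth : ∃ L' : Set (EuclideanSpace ℝ (Fin n)), L'.Nonempty ∧ IsCompact L' ∧
      Convex ℝ L' ∧ L = L' + closedBall (0 : EuclideanSpace ℝ (Fin n)) ε)
    (hd : hausdorffDist K L ≤ δ)
    (p : EuclideanSpace ℝ (Fin n) → EuclideanSpace ℝ (Fin n))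
    (hp : ∀ x ∈ frontier K, p x ∈ frontier L ∧ dist x (p x) = infDist x (frontier L))
    (uK uL : EuclideanSpace ℝ (Fin n) → EuclideanSpace ℝ (Fin n))
    (huK_unit : ∀ x ∈ frontier K, ‖uK x‖ = 1)
    (huK_normal : ∀ x ∈ frontier K, ∀ y ∈ K, ⟪y - x, uK x⟫ ≤ 0)
    (huL_unit : ∀ x ∈ frontier L, ‖uL x‖ = 1)
    (huL_normal : ∀ x ∈ frontier L, ∀ y ∈ L, ⟪y - x, uL x⟫ ≤ 0) :
    ∀ x ∈ frontier K,
      Real.sqrt (‖p x - x‖ ^ 2 + ‖uL (p x) - uK x‖ ^ 2) ≤ δ + 2 * Real.sqrt (δ / ε) := by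
  intro x hx
  obtain ⟨K', -, hK', -, rfl⟩ := hKsmooth
  obtain ⟨L', hL'ne, hL', -, rfl⟩ := hLsmooth
  have hKc := hK'.add (isCompact_closedBall (0 : EuclideanSpace ℝ (Fin n)) ε)
  have hLc := hL'.add (isCompact_closedBall (0 : EuclideanSpace ℝ (Fin n)) ε)
  have hxK : x ∈ K' + closedBall 0 ε := hKc.isClosed.frontier_subset hx
  have hKL : hausdorffEDist (K' + closedBall 0 ε) (L' + closedBall 0 ε) ≠ ⊤ :=
    hausdorffEDist_ne_top_of_nonempty_of_bounded ⟨x, hxK⟩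
      (hL'ne.add (nonempty_closedBall.2 hε.1.le)) hKc.isBounded hLc.isBounded
  have hxu : IsOuterNormal _ x (uK x) := huK_normal x hx
  obtain ⟨hpx, hpx_dist⟩ := hp x hx
  have hdisp : ‖p x - x‖ ≤ δ := by
    rw [← dist_eq_norm, dist_comm, hpx_dist]
    exact (hxu.infDist_frontier_le_hausdorffDist (huK_unit x hx) hxK hKL).trans hd
  have hnormal : ‖uL (p x) - uK x‖ ≤ 2 * √(δ / ε) :=
    hxu.norm_sub_le_of_mem_add_closedBall (huK_unit x hx) hxK (huL_normal _ hpx) (huL_unit _ hpx)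
      (hLc.isClosed.frontier_subset hpx) hε.1 hKL hd hdisp
  calc √(‖p x - x‖ ^ 2 + ‖uL (p x) - uK x‖ ^ 2) ≤ ‖p x - x‖ + ‖uL (p x) - uK x‖ :=
        Real.sqrt_le_iff.2 ⟨by positivity,
          by nlinarith [norm_nonneg (p x - x), norm_nonneg (uL (p x) - uK x)]⟩
    _ ≤ δ + 2 * √(δ / ε) := add_le_add hdisp hnormal

/-- For ε-smooth convex bodies K, L with Hausdorff distance at most δ < ε/2, the map
G : Nor K → Nor L, (x, u_K(x)) ↦ (p(x), u_L(p(x))), moves every point of the normal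
bundle of K (a subset of ℝ^{2n} with the Euclidean norm) by at most δ + 2√(δ/ε). -/
theorem normal_bundle_map_displacement
    (n : ℕ) (ε δ : ℝ) (hε : ε ∈ Set.Ioo (0:ℝ) 1) (hδ : δ ∈ Set.Ioo (0:ℝ) (ε/2))
    (K L : Set (EuclideanSpace ℝ (Fin n)))
    (hKsmooth : ∃ K' : Set (EuclideanSpace ℝ (Fin n)), K'.Nonempty ∧ IsCompact K' ∧
      Convex ℝ K' ∧ K = K' + closedBall (0 : EuclideanSpace ℝ (Fin n)) ε)
    (hLsmooth : ∃ L' : Set (EuclideanSpace ℝ (Fin n)), L'.Nonempty ∧ IsCompact L' ∧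
      Convex ℝ L' ∧ L = L' + closedBall (0 : EuclideanSpace ℝ (Fin n)) ε)
    (hd : hausdorffDist K L ≤ δ)
    (p : EuclideanSpace ℝ (Fin n) → EuclideanSpace ℝ (Fin n))
    (hp : ∀ x ∈ frontier K, p x ∈ frontier L ∧ dist x (p x) = infDist x (frontier L))
    (uK uL : EuclideanSpace ℝ (Fin n) → EuclideanSpace ℝ (Fin n))
    (huK_unit : ∀ x ∈ frontier K, ‖uK x‖ = 1)
    (huK_normal : ∀ x ∈ frontier K, ∀ y ∈ K, ⟪y - x, uK x⟫ ≤ 0)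
    (huL_unit : ∀ x ∈ frontier L, ‖uL x‖ = 1)
    (huL_normal : ∀ x ∈ frontier L, ∀ y ∈ L, ⟪y - x, uL x⟫ ≤ 0) :
    ∀ x ∈ frontier K,
      Real.sqrt (‖p x - x‖ ^ 2 + ‖uL (p x) - uK x‖ ^ 2) ≤ δ + 2 * Real.sqrt (δ / ε) :=
  normal_bundle_map_displacement_general n ε δ hε K L hKsmooth hLsmooth hd p hp uK uL huK_unit
    huK_normal huL_unit huL_normal
end
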